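/- arXiv:1107.3374 — 2 statements merged into one kernel-verified Lean document; each statement's English description precedes it below -/
import Mathlib

section
/- Let n ≥ 1, let K ⊆ ℂⁿ be a nonempty compact set, p ∈ ℂⁿ, and C > 0. Suppose that for every entire function f : ℂⁿ → ℂ (i.e., f differentiable over ℂ on all of ℂⁿ) one has |f(p)| ≤ C · sup_{x ∈ K} |f(x)|. Then for every entire function f : ℂⁿ → ℂ one has |f(p)| ≤ sup_{x ∈ K} |f(x)|. -/
open Complex Filter

/-! Apply the estimate to the powers `f ^ k`: since `‖·‖` and the supremum commute with `k`-th
powers, `‖f p‖ ^ k ≤ C * (sup_K ‖f‖) ^ k` for every `k ≥ 1`. This forces `‖f p‖ ≤ sup_K ‖f‖`: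
otherwise the ratio `sup_K ‖f‖ / ‖f p‖` is below `1`, and `C` times its `k`-th power tends to `0`. -/

theorem le_of_eventually_pow_le_mul_pow {a b C : ℝ} (hb : 0 ≤ b)
    (h : ∀ᶠ k in atTop, a ^ k ≤ C * b ^ k) : a ≤ b := by
  by_contra! hba
  have ha : 0 < a := hb.trans_lt hba
  have hratio : Tendsto (fun k : ℕ => C * (b / a) ^ k) atTop (nhds 0) := by
    simpa using (tendsto_pow_atTop_nhds_zero_of_lt_one (div_nonneg hb ha.le)
      ((div_lt_one ha).2 hba)).const_mul C
  obtain ⟨k, hk, hCk⟩ := (h.and (hratio.eventually (gt_mem_nhds one_pos))).exists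
  have : C * b ^ k < a ^ k := by
    rwa [div_pow, mul_div_assoc', div_lt_one (pow_pos ha k)] at hCk
  linarith

theorem iSup_norm_pow {ι 𝕜 : Type*} [NormedDivisionRing 𝕜] (g : ι → 𝕜) {k : ℕ} (hk : k ≠ 0) :
    ⨆ i, ‖g i ^ k‖ = (⨆ i, ‖g i‖) ^ k := by
  simp_rw [norm_pow]
  exact (Real.iSup_pow_of_ne_zero (fun _ => norm_nonneg _) hk).symm

theorem statement1_general (n : ℕ) (K : Set (Fin n → ℂ)) (p : Fin n → ℂ) (C : ℝ)
    (H : ∀ f : (Fin n → ℂ) → ℂ, Differentiable ℂ f →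
      ‖f p‖ ≤ C * ⨆ x : K, ‖f x‖) :
    ∀ f : (Fin n → ℂ) → ℂ, Differentiable ℂ f →
      ‖f p‖ ≤ ⨆ x : K, ‖f x‖ := by
  intro f hf
  refine le_of_eventually_pow_le_mul_pow (C := C) (Real.iSup_nonneg fun _ => norm_nonneg _) ?_
  filter_upwards [eventually_ne_atTop 0] with k hk
  calc ‖f p‖ ^ k = ‖f p ^ k‖ := (norm_pow _ _).symm
    _ ≤ C * ⨆ x : K, ‖f x ^ k‖ := H (fun x => f x ^ k) (hf.pow k)
    _ = C * (⨆ x : K, ‖f x‖) ^ k := by rw [iSup_norm_pow (fun x : K => f x) hk]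

/-- If point evaluation of entire functions on `ℂⁿ` at `p` is dominated by `C` times the
sup-norm over a nonempty compact set `K`, then it is dominated by the sup-norm itself. -/
theorem statement1 (n : ℕ) (hn : 1 ≤ n) (K : Set (Fin n → ℂ)) (hK : IsCompact K)
    (hKne : K.Nonempty) (p : Fin n → ℂ) (C : ℝ) (hC : 0 < C)
    (H : ∀ f : (Fin n → ℂ) → ℂ, Differentiable ℂ f →
      ‖f p‖ ≤ C * ⨆ x : K, ‖f x‖) :
    ∀ f : (Fin n → ℂ) → ℂ, Differentiable ℂ f →
      ‖f p‖ ≤ ⨆ x : K, ‖f x‖ :=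
  statement1_general n K p C H
end

section
/- Let n ≥ 1, m ≥ 2n, and d ∈ ℕ. For i = 1,…,n define the ℂ-linear operator Lᵢ on the polynomial ring ℂ[x₁,…,x_m] (MvPolynomial (Fin m) ℂ) by Lᵢ f = ∂f/∂xᵢ + i·∂f/∂x_{n+i}. Suppose g₁,…,g_n ∈ ℂ[x₁,…,x_m] are homogeneous of degree d and satisfy Lᵢ g_j = L_j gᵢ for all 1 ≤ i, j ≤ n. Then there exists f ∈ ℂ[x₁,…,x_m], homogeneous of degree d + 1, such that Lᵢ f = gᵢ for all i = 1,…,n. -/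
/-!
The shear `φ : x_{n+j} ↦ x_{n+j} + I·x_j` intertwines `Lⱼ` with the plain partial derivative,
`∂ⱼ (φ p) = φ (Lⱼ p)`, and the opposite shear inverts `φ`. So the `φ gⱼ` are closed for
`∂₁, …, ∂_n`, and the claim reduces to the polynomial Poincaré lemma in the variables
`x' = (x₁, …, x_n)`: with `R p = ∫₀¹ p(s x', x'') ds`, Euler's identity gives
`R p + ∑ᵢ xᵢ ∂ᵢ (R p) = p`, and closedness turns this into `∂ⱼ (∑ᵢ xᵢ R gᵢ) = gⱼ`.
Both `φ` and `R` preserve homogeneity.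
-/

namespace MvPolynomial

section RadialIntegral

variable {σ ι R K : Type*} [Fintype ι] {e : ι → σ}

variable (e) in
def partialDegree (μ : σ →₀ ℕ) : ℕ := ∑ i, μ (e i)

theorem partialDegree_add (μ ν : σ →₀ ℕ) :
    partialDegree e (μ + ν) = partialDegree e μ + partialDegree e ν :=
  Finset.sum_add_distrib

theorem partialDegree_single_one (he : Function.Injective e) (k : ι) :
    partialDegree e (Finsupp.single (e k) 1) = 1 := by
  classical
  simp [partialDegree, Finsupp.single_apply, he.eq_iff]

theorem partialDegree_sub_single_add_one (he : Function.Injective e) {μ : σ →₀ ℕ} {k : ι}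
    (hk : μ (e k) ≠ 0) : partialDegree e (μ - Finsupp.single (e k) 1) + 1 = partialDegree e μ := by
  rw [← congrArg (partialDegree e)
      (tsub_add_cancel_of_le (Finsupp.single_le_iff.2 (Nat.one_le_iff_ne_zero.2 hk))),
    partialDegree_add, partialDegree_single_one he]

theorem sum_X_mul_pderiv_monomial [CommSemiring R] (μ : σ →₀ ℕ) (c : R) :
    ∑ i, X (e i) * pderiv (e i) (monomial μ c) = partialDegree e μ • monomial μ c := by
  simp_rw [X_mul_pderiv_monomial, partialDegree, Finset.sum_smul]

variable [Field K]

variable (e) in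
/-- `radialIntegral e t p = ∫₀¹ s ^ (t - 1) • p (s • x) ds`, where `s` scales only the
variables `e i`. -/
noncomputable def radialIntegral (t : ℕ) : MvPolynomial σ K →ₗ[K] MvPolynomial σ K :=
  Finsupp.lsum K (fun μ => ((partialDegree e μ + t : ℕ) : K)⁻¹ • monomial μ) ∘ₗ
    (AddMonoidAlgebra.coeffLinearEquiv K).toLinearMap

theorem radialIntegral_monomial (t : ℕ) (μ : σ →₀ ℕ) (c : K) :
    radialIntegral e t (monomial μ c) = monomial μ (((partialDegree e μ + t : ℕ) : K)⁻¹ * c) :=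
  (sum_monomial_eq <| by simp).trans (smul_monomial _)

theorem coeff_radialIntegral (t : ℕ) (p : MvPolynomial σ K) (μ : σ →₀ ℕ) :
    coeff μ (radialIntegral e t p) = ((partialDegree e μ + t : ℕ) : K)⁻¹ * coeff μ p := by
  classical
  induction p using MvPolynomial.induction_on' with
  | monomial ν c =>
    simp only [radialIntegral_monomial, coeff_monomial]
    split_ifs with h <;> simp [h]
  | add p q hp hq => rw [map_add, coeff_add, coeff_add, hp, hq, mul_add]

theorem IsHomogeneous.radialIntegral {p : MvPolynomial σ K} {d : ℕ} (hp : p.IsHomogeneous d)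
    (t : ℕ) : (radialIntegral e t p).IsHomogeneous d := fun μ hμ =>
  hp (right_ne_zero_of_mul (coeff_radialIntegral (e := e) t p μ ▸ hμ))

theorem pderiv_radialIntegral (he : Function.Injective e) (t : ℕ) (k : ι)
    (p : MvPolynomial σ K) :
    pderiv (e k) (radialIntegral e t p) = radialIntegral e (t + 1) (pderiv (e k) p) := by
  induction p using MvPolynomial.induction_on' with
  | monomial μ c =>
    rw [radialIntegral_monomial, pderiv_monomial, pderiv_monomial, radialIntegral_monomial]
    by_cases hk : μ (e k) = 0
    · simp [hk]
    · rw [add_comm t 1, ← add_assoc, partialDegree_sub_single_add_one he hk, mul_assoc]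
  | add p q hp hq => simp only [map_add, hp, hq]

variable [CharZero K]

theorem radialIntegral_add_sum_X_mul_pderiv (p : MvPolynomial σ K) :
    radialIntegral e 1 p + ∑ i, X (e i) * pderiv (e i) (radialIntegral e 1 p) = p := by
  induction p using MvPolynomial.induction_on' with
  | monomial μ c =>
    rw [radialIntegral_monomial, sum_X_mul_pderiv_monomial, ← succ_nsmul', smul_monomial,
      nsmul_eq_mul, mul_inv_cancel_left₀ (Nat.cast_ne_zero.2 (Nat.succ_ne_zero _))]
  | add p q hp hq =>
    simp only [map_add, mul_add, Finset.sum_add_distrib]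
    linear_combination hp + hq

theorem exists_isHomogeneous_pderiv_eq_of_pderiv_symm (he : Function.Injective e) {d : ℕ}
    (g : ι → MvPolynomial σ K) (hg : ∀ i, (g i).IsHomogeneous d)
    (hsymm : ∀ i j, pderiv (e i) (g j) = pderiv (e j) (g i)) :
    ∃ f : MvPolynomial σ K, f.IsHomogeneous (d + 1) ∧ ∀ i, pderiv (e i) f = g i := by
  classical
  refine ⟨∑ i, X (e i) * radialIntegral e 1 (g i), ?_, fun j => ?_⟩
  · refine IsHomogeneous.sum _ _ _ fun i _ => ?_
    rw [add_comm]
    exact (isHomogeneous_X K (e i)).mul ((hg i).radialIntegral 1)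
  · have hterm (i : ι) : pderiv (e j) (X (e i) * radialIntegral e 1 (g i)) =
        Pi.single j (radialIntegral e 1 (g j)) i +
          X (e i) * pderiv (e i) (radialIntegral e 1 (g j)) := by
      rw [pderiv_mul, pderiv_radialIntegral he, hsymm j i, ← pderiv_radialIntegral he, pderiv_X,
        Pi.single_apply, Pi.single_apply, he.eq_iff]
      split_ifs with h <;> simp [h]
    rw [map_sum, Finset.sum_congr rfl fun i _ => hterm i, Finset.sum_add_distrib,
      Finset.sum_pi_single', if_pos (Finset.mem_univ j), radialIntegral_add_sum_X_mul_pderiv]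

end RadialIntegral

theorem derivation_algHom_apply_eq_of_X {R σ A : Type*} [CommSemiring R] [CommSemiring A]
    [Algebra R A] (φ : MvPolynomial σ R →ₐ[R] A) (D : Derivation R A A)
    (D' : Derivation R (MvPolynomial σ R) (MvPolynomial σ R))
    (h : ∀ j, D (φ (X j)) = φ (D' (X j))) (p : MvPolynomial σ R) : D (φ p) = φ (D' p) := by
  induction p using MvPolynomial.induction_on with
  | C r => rw [derivation_C, map_zero, ← algebraMap_eq, AlgHom.commutes, D.map_algebraMap]
  | add p q hp hq => rw [map_add, map_add, map_add, hp, hq, map_add]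
  | mul_X p j hp =>
    rw [map_mul, D.leibniz, D'.leibniz, h, hp, map_add, smul_eq_mul, smul_eq_mul, smul_eq_mul,
      smul_eq_mul, map_mul, map_mul]

section Shear

variable {R σ ι : Type*} [CommSemiring R] [DecidableEq σ] [Fintype ι] {a b : ι → σ}

variable (a b) in
noncomputable def shear (t : R) : MvPolynomial σ R →ₐ[R] MvPolynomial σ R :=
  aeval fun j => X j + C t * ∑ i with b i = j, X (a i)

theorem shear_X (t : R) (j : σ) : shear a b t (X j) = X j + C t * ∑ i with b i = j, X (a i) :=
  aeval_X _ _

theorem shear_X_left (hab : ∀ i j, a i ≠ b j) (t : R) (k : ι) :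
    shear a b t (X (a k)) = X (a k) := by
  rw [shear_X, Finset.filter_false_of_mem fun i _ => (hab k i).symm, Finset.sum_empty, mul_zero,
    add_zero]

theorem shear_zero (p : MvPolynomial σ R) : shear a b 0 p = p := by
  simp [shear]

theorem shear_shear (hab : ∀ i j, a i ≠ b j) (t s : R) (p : MvPolynomial σ R) :
    shear a b t (shear a b s p) = shear a b (t + s) p := by
  have hcomp : (shear a b t).comp (shear a b s) = shear a b (t + s) := algHom_ext fun j => by
    simp only [AlgHom.comp_apply, shear_X, map_add, map_mul, map_sum, shear_X_left hab, algHom_C,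
      algebraMap_eq]
    ring
  exact AlgHom.congr_fun hcomp p

theorem IsHomogeneous.shear {p : MvPolynomial σ R} {d : ℕ} (hp : p.IsHomogeneous d) (t : R) :
    (shear a b t p).IsHomogeneous d := by
  have h := hp.aeval (fun j => X j + C t * ∑ i with b i = j, X (a i)) fun j =>
    (isHomogeneous_X R j).add <| by
      rw [Finset.mul_sum]
      exact IsHomogeneous.sum _ _ _ fun i _ => isHomogeneous_C_mul_X t (a i)
  rwa [one_mul] at h

theorem pderiv_shear (ha : Function.Injective a) (hab : ∀ i j, a i ≠ b j) (t : R) (k : ι)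
    (p : MvPolynomial σ R) :
    pderiv (a k) (shear a b t p) = shear a b t (pderiv (a k) p + t • pderiv (b k) p) := by
  classical
  rw [derivation_algHom_apply_eq_of_X (shear a b t) _ (pderiv (a k) + t • pderiv (b k))
    (fun j => ?_) p, Derivation.add_apply, Derivation.smul_apply]
  have hsum : ∑ i with b i = j, pderiv (a k) (X (a i) : MvPolynomial σ R) =
      if b k = j then 1 else 0 := by
    have hX (i : ι) : pderiv (a k) (X (a i) : MvPolynomial σ R) = if i = k then 1 else 0 := by
      split_ifs with h
      · rw [h, pderiv_X_self]
      · exact pderiv_X_of_ne (ha.ne h)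
    simp only [hX, Finset.sum_ite_eq', Finset.mem_filter, Finset.mem_univ, true_and]
  rw [shear_X, map_add, pderiv_C_mul, map_sum, hsum, Derivation.add_apply, Derivation.smul_apply,
    pderiv_X, pderiv_X]
  by_cases hj : j = a k
  · subst hj
    simp [(hab k k).symm]
  by_cases hj' : b k = j
  · subst hj'
    simp [hab, smul_eq_C_mul]
  · simp [hj, hj']

end Shear

theorem exists_isHomogeneous_pderiv_add_smul_pderiv_eq {σ ι K : Type*} [Field K] [CharZero K]
    [Fintype ι] {a b : ι → σ} (ha : Function.Injective a) (hab : ∀ i j, a i ≠ b j) (c : K)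
    {d : ℕ} (g : ι → MvPolynomial σ K) (hg : ∀ i, (g i).IsHomogeneous d)
    (hsymm : ∀ i j, pderiv (a i) (g j) + c • pderiv (b i) (g j) =
      pderiv (a j) (g i) + c • pderiv (b j) (g i)) :
    ∃ f : MvPolynomial σ K, f.IsHomogeneous (d + 1) ∧
      ∀ i, pderiv (a i) f + c • pderiv (b i) f = g i := by
  classical
  obtain ⟨F, hF, hFg⟩ := exists_isHomogeneous_pderiv_eq_of_pderiv_symm ha
    (fun i => shear a b c (g i)) (fun i => (hg i).shear c)
    fun i j => by simp only [pderiv_shear ha hab, hsymm]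
  have hinv (p : MvPolynomial σ K) : shear a b (-c) (shear a b c p) = p := by
    rw [shear_shear hab, neg_add_cancel, shear_zero]
  refine ⟨shear a b (-c) F, hF.shear (-c), fun i => ?_⟩
  calc _ = shear a b (-c) (shear a b c (pderiv (a i) (shear a b (-c) F) +
          c • pderiv (b i) (shear a b (-c) F))) := (hinv _).symm
    _ = shear a b (-c) (pderiv (a i) (shear a b c (shear a b (-c) F))) := by
      rw [pderiv_shear ha hab c]
    _ = g i := by rw [shear_shear hab, add_neg_cancel, shear_zero, hFg, hinv]

end MvPolynomial

open MvPolynomial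

/-- Exactness of the constant-coefficient Cauchy–Riemann-type operators
`Lᵢ = ∂/∂xᵢ + i ∂/∂x_{n+i}` on homogeneous polynomials: if `g₁, …, g_n` are homogeneous of
degree `d` and `Lᵢ g_j = L_j g_i` for all `i, j`, then there is a homogeneous polynomial `f`
of degree `d + 1` with `Lᵢ f = g_i` for all `i`. -/
theorem statement5 (n m d : ℕ) (hm : 2 * n ≤ m)
    (g : Fin n → MvPolynomial (Fin m) ℂ)
    (hg : ∀ i : Fin n, (g i).IsHomogeneous d)
    (hsym : ∀ i j : Fin n,
      pderiv (⟨(i : ℕ), by have := i.isLt; omega⟩ : Fin m) (g j) +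
        Complex.I • pderiv (⟨n + (i : ℕ), by have := i.isLt; omega⟩ : Fin m) (g j) =
      pderiv (⟨(j : ℕ), by have := j.isLt; omega⟩ : Fin m) (g i) +
        Complex.I • pderiv (⟨n + (j : ℕ), by have := j.isLt; omega⟩ : Fin m) (g i)) :
    ∃ f : MvPolynomial (Fin m) ℂ, f.IsHomogeneous (d + 1) ∧
      ∀ i : Fin n,
        pderiv (⟨(i : ℕ), by have := i.isLt; omega⟩ : Fin m) f +
          Complex.I • pderiv (⟨n + (i : ℕ), by have := i.isLt; omega⟩ : Fin m) f = g i :=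
  exists_isHomogeneous_pderiv_add_smul_pderiv_eq
    (a := fun i : Fin n => (⟨i, by omega⟩ : Fin m)) (b := fun i => ⟨n + i, by omega⟩)
    (fun i j h => Fin.ext (Fin.mk.inj h)) (fun i j h => by have := Fin.mk.inj h; omega)
    Complex.I g hg hsym
end
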